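/- arXiv:1303.2241 — 7 statements merged into one kernel-verified Lean document; each statement's English description precedes it below -/
import Mathlib

section
/- Let p be a prime, m ≥ 1, and l ∈ {3,4,5,6}. Suppose residues e_0, …, e_{l-1} modulo p^m satisfy the cyclic system 2e_0 + e_1 ≡ 2e_1 + e_2 ≡ ⋯ ≡ 2e_{l-2} + e_{l-1} ≡ 2e_{l-1} + e_0 ≡ j (mod p^m), and the e_i are not all congruent to each other modulo p^m. Then p divides ((-2)^l - 1)/3. -/
/-- A cycle of length `l ∈ {3,4,5,6}` in the diagram forces `p ∣ ((-2)^l - 1)/3`. -/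
theorem stmt_2 (p : ℕ) (hp : p.Prime) (m : ℕ) (hm : 1 ≤ m) (l : ℕ)
    (hl : l ∈ ({3, 4, 5, 6} : Set ℕ)) (e : ℕ → ZMod (p ^ m)) (j : ZMod (p ^ m))
    (hcyc : ∀ i < l, 2 * e i + e ((i + 1) % l) = j)
    (hne : ¬ ∀ i < l, ∀ k < l, e i = e k) :
    (p : ℤ) ∣ ((-2 : ℤ) ^ l - 1) / 3 := by
  by_contra hdvd
  apply hne
  have key : ∀ c : ℕ, ¬ p ∣ c → ∀ a b : ZMod (p ^ m),
      ((c : ℕ) : ZMod (p ^ m)) * (a - b) = 0 → a = b := by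
    intro c hc a b hab
    haveI : NeZero (p ^ m) := ⟨pow_ne_zero m hp.pos.ne'⟩
    have hu : IsUnit ((c : ℕ) : ZMod (p ^ m)) := by
      rw [ZMod.isUnit_iff_coprime]
      exact ((hp.coprime_iff_not_dvd.mpr hc).symm).pow_right m
    exact sub_eq_zero.mp ((hu.mul_right_eq_zero).mp hab)
  have hcast : ∀ c : ℕ, (p : ℤ) ∣ (c : ℤ) → p ∣ c := fun c h => Int.ofNat_dvd.mp h
  simp only [Set.mem_insert_iff, Set.mem_singleton_iff] at hl
  rcases hl with rfl | rfl | rfl | rfl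
  · -- l = 3
    have h0 := hcyc 0 (by norm_num)
    have h1 := hcyc 1 (by norm_num)
    have h2 := hcyc 2 (by norm_num)
    norm_num at h0 h1 h2 hdvd
    have hc : ¬ p ∣ 3 := fun hd => hdvd (by exact_mod_cast hd)
    have k0 : e 1 = e 0 := key 3 hc _ _ (by push_cast; linear_combination -h0 + 2*h1 - h2)
    have k1 : e 2 = e 1 := key 3 hc _ _ (by push_cast; linear_combination -h1 + 2*h2 - h0)
    intro i hi k hk
    interval_cases i <;> interval_cases k <;> simp [k0, k1]
  · -- l = 4
    have h0 := hcyc 0 (by norm_num)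
    have h1 := hcyc 1 (by norm_num)
    have h2 := hcyc 2 (by norm_num)
    have h3 := hcyc 3 (by norm_num)
    norm_num at h0 h1 h2 h3 hdvd
    have hc : ¬ p ∣ 5 := fun hd => hdvd (by exact_mod_cast hd)
    have k0 : e 1 = e 0 := key 5 hc _ _ (by push_cast; linear_combination -3*h0 + 4*h1 - 2*h2 + h3)
    have k1 : e 2 = e 1 := key 5 hc _ _ (by push_cast; linear_combination -3*h1 + 4*h2 - 2*h3 + h0)
    have k2 : e 3 = e 2 := key 5 hc _ _ (by push_cast; linear_combination -3*h2 + 4*h3 - 2*h0 + h1)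
    intro i hi k hk
    interval_cases i <;> interval_cases k <;> simp [k0, k1, k2]
  · -- l = 5
    have h0 := hcyc 0 (by norm_num)
    have h1 := hcyc 1 (by norm_num)
    have h2 := hcyc 2 (by norm_num)
    have h3 := hcyc 3 (by norm_num)
    have h4 := hcyc 4 (by norm_num)
    norm_num at h0 h1 h2 h3 h4 hdvd
    have hc : ¬ p ∣ 11 := fun hd => hdvd (by exact_mod_cast hd)
    have k0 : e 1 = e 0 := key 11 hc _ _ (by push_cast; linear_combination -5*h0 + 8*h1 - 4*h2 + 2*h3 - h4)
    have k1 : e 2 = e 1 := key 11 hc _ _ (by push_cast; linear_combination -5*h1 + 8*h2 - 4*h3 + 2*h4 - h0)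
    have k2 : e 3 = e 2 := key 11 hc _ _ (by push_cast; linear_combination -5*h2 + 8*h3 - 4*h4 + 2*h0 - h1)
    have k3 : e 4 = e 3 := key 11 hc _ _ (by push_cast; linear_combination -5*h3 + 8*h4 - 4*h0 + 2*h1 - h2)
    intro i hi k hk
    interval_cases i <;> interval_cases k <;> simp [k0, k1, k2, k3]
  · -- l = 6
    have h0 := hcyc 0 (by norm_num)
    have h1 := hcyc 1 (by norm_num)
    have h2 := hcyc 2 (by norm_num)
    have h3 := hcyc 3 (by norm_num)
    have h4 := hcyc 4 (by norm_num)
    have h5 := hcyc 5 (by norm_num)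
    norm_num at h0 h1 h2 h3 h4 h5 hdvd
    have hc : ¬ p ∣ 21 := fun hd => hdvd (by exact_mod_cast hd)
    have k0 : e 1 = e 0 := key 21 hc _ _ (by push_cast; linear_combination -11*h0 + 16*h1 - 8*h2 + 4*h3 - 2*h4 + h5)
    have k1 : e 2 = e 1 := key 21 hc _ _ (by push_cast; linear_combination -11*h1 + 16*h2 - 8*h3 + 4*h4 - 2*h5 + h0)
    have k2 : e 3 = e 2 := key 21 hc _ _ (by push_cast; linear_combination -11*h2 + 16*h3 - 8*h4 + 4*h5 - 2*h0 + h1)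
    have k3 : e 4 = e 3 := key 21 hc _ _ (by push_cast; linear_combination -11*h3 + 16*h4 - 8*h5 + 4*h0 - 2*h1 + h2)
    have k4 : e 5 = e 4 := key 21 hc _ _ (by push_cast; linear_combination -11*h4 + 16*h5 - 8*h0 + 4*h1 - 2*h2 + h3)
    intro i hi k hk
    interval_cases i <;> interval_cases k <;> simp [k0, k1, k2, k3, k4]
end

section
/- Let p ∤ 3 be a prime with p ∉ {2, 5, 7, 11}, m ≥ 1, and suppose residues e_0, …, e_5 modulo p^m satisfy: for each i ∈ {0,…,5} there exists i' with 2e_i + e_{i'} ≡ j (mod p^m), where every vertex has exactly one outgoing and (since p ≠ 2) at most one incoming arrow. Then e_0 ≡ e_1 ≡ ⋯ ≡ e_5 (mod p^m) and j ≡ 3e_0 (mod p^m). -/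
/-- For `p ∉ {2,3,5,7,11}` prime, if each of the six residues has an outgoing arrow
(`∀ i, ∃ i', 2 e_i + e_{i'} ≡ j`), then all residues are equal and `j ≡ 3 e_0`. -/
theorem stmt_3 (p : ℕ) (hp : p.Prime) (hp2 : p ≠ 2) (hp3 : p ≠ 3) (hp5 : p ≠ 5)
    (hp7 : p ≠ 7) (hp11 : p ≠ 11) (m : ℕ) (hm : 1 ≤ m)
    (e : Fin 6 → ZMod (p ^ m)) (j : ZMod (p ^ m))
    (harrow : ∀ i : Fin 6, ∃ i' : Fin 6, 2 * e i + e i' = j) :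
    (∀ i k : Fin 6, e i = e k) ∧ j = 3 * e 0 := by
  choose g hg using harrow
  have hq : ∀ q : ℕ, q.Prime → q ≠ p → IsUnit ((q : ℕ) : ZMod (p ^ m)) := by
    intro q hq hqp
    rw [ZMod.isUnit_iff_coprime]
    exact Nat.Coprime.pow_right m ((Nat.coprime_primes hq hp).mpr hqp)
  have h2 : IsUnit (2 : ZMod (p ^ m)) := by
    simpa using hq 2 Nat.prime_two (Ne.symm hp2)
  have h3 : IsUnit (3 : ZMod (p ^ m)) := by
    simpa using hq 3 Nat.prime_three (Ne.symm hp3)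
  have h5 : IsUnit (5 : ZMod (p ^ m)) := by
    simpa using hq 5 (by norm_num) (Ne.symm hp5)
  have h7 : IsUnit (7 : ZMod (p ^ m)) := by
    simpa using hq 7 (by norm_num) (Ne.symm hp7)
  have h11 : IsUnit (11 : ZMod (p ^ m)) := by
    simpa using hq 11 (by norm_num) (Ne.symm hp11)
  have key : ∀ i, 3 * e i = j := by
    intro i
    have hd : ∀ k : ℕ, 3 * e (g^[k] i) - j = (-2) ^ k * (3 * e i - j) := by
      intro k
      induction k with
      | zero => simp
      | succ k ih =>
        rw [Function.iterate_succ_apply']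
        have h := hg (g^[k] i)
        have h' : 3 * e (g (g^[k] i)) - j = -2 * (3 * e (g^[k] i) - j) := by
          linear_combination 3 * h
        rw [h', ih]; ring
    have main : ∀ a b : ℕ, a < b → b ≤ 6 → g^[a] i = g^[b] i → 3 * e i = j := by
      intro a b hab hb6 heq
      have ha := hd a
      have hb := hd b
      have hl1 : 1 ≤ b - a := by omega
      have hl6 : b - a ≤ 6 := by omega
      have hsplit : ((-2 : ZMod (p ^ m)) ^ b) = (-2) ^ a * (-2) ^ (b - a) := by
        rw [← pow_add]; congr 1; omega
      have heq' : (-2 : ZMod (p ^ m)) ^ a * (3 * e i - j) =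
          (-2) ^ a * ((-2) ^ (b - a) * (3 * e i - j)) := by
        rw [← mul_assoc, ← hsplit, ← ha, ← hb, heq]
      have hua : IsUnit ((-2 : ZMod (p ^ m)) ^ a) := (h2.neg).pow _
      have hcanc := hua.mul_left_cancel heq'
      have heq2 : ((-2 : ZMod (p ^ m)) ^ (b - a) - 1) * (3 * e i - j) = 0 := by
        linear_combination -hcanc
      set l := b - a with hldef
      have hul : IsUnit ((-2 : ZMod (p ^ m)) ^ l - 1) := by
        interval_cases l
        · have h' : ((-2 : ZMod (p ^ m)) ^ 1 - 1) = -3 := by ring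
          rw [h']; exact h3.neg
        · have h' : ((-2 : ZMod (p ^ m)) ^ 2 - 1) = 3 := by ring
          rw [h']; exact h3
        · have h' : ((-2 : ZMod (p ^ m)) ^ 3 - 1) = -(3 * 3) := by ring
          rw [h']; exact (h3.mul h3).neg
        · have h' : ((-2 : ZMod (p ^ m)) ^ 4 - 1) = 3 * 5 := by ring
          rw [h']; exact h3.mul h5
        · have h' : ((-2 : ZMod (p ^ m)) ^ 5 - 1) = -(3 * 11) := by ring
          rw [h']; exact (h3.mul h11).neg
        · have h' : ((-2 : ZMod (p ^ m)) ^ 6 - 1) = 3 * (3 * 7) := by ring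
          rw [h']; exact h3.mul (h3.mul h7)
      have hz := (hul.mul_right_eq_zero).mp heq2
      have : 3 * e i - j = 0 := hz
      linear_combination this
    obtain ⟨a, b, hab, heq⟩ :=
      Fintype.exists_ne_map_eq_of_card_lt (fun k : Fin 7 => g^[(k : ℕ)] i) (by simp)
    rcases hab.lt_or_gt with hlt | hlt
    · exact main (a : ℕ) (b : ℕ) hlt (by omega) heq
    · exact main (b : ℕ) (a : ℕ) hlt (by omega) heq.symm
  constructor
  · intro i k
    have := (key i).trans (key k).symm
    exact h3.mul_left_cancel this
  · exact (key 0).symm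
end

section
/- The cubic hypersurface in ℙ^5 defined by T = x_0^2 x_1 + x_1^2 x_2 + x_2^2 x_3 + x_3^2 x_4 + x_4^2 x_5 + x_5^2 x_0 is smooth: the only common zero in ℂ^6 of the six partial derivatives of T is the origin. -/
private lemma cascade9 (a b c d e f : ℂ)
    (h0 : b * (2 * a) + f ^ 2 = 0)
    (h2 : b ^ 2 + d * (2 * c) = 0)
    (h3 : c ^ 2 + e * (2 * d) = 0)
    (h4 : d ^ 2 + f * (2 * e) = 0)
    (h5 : e ^ 2 + a * (2 * f) = 0)
    (ha : a = 0) :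
    b = 0 ∧ c = 0 ∧ d = 0 ∧ e = 0 ∧ f = 0 := by
  subst ha
  have hf : f = 0 := by
    have : f ^ 2 = 0 := by linear_combination h0
    exact pow_eq_zero_iff two_ne_zero |>.mp this
  subst hf
  have he : e = 0 := by
    have : e ^ 2 = 0 := by linear_combination h5
    exact pow_eq_zero_iff two_ne_zero |>.mp this
  subst he
  have hd : d = 0 := by
    have : d ^ 2 = 0 := by linear_combination h4
    exact pow_eq_zero_iff two_ne_zero |>.mp this
  subst hd
  have hc : c = 0 := by
    have : c ^ 2 = 0 := by linear_combination h3
    exact pow_eq_zero_iff two_ne_zero |>.mp this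
  subst hc
  have hb : b = 0 := by
    have : b ^ 2 = 0 := by linear_combination h2
    exact pow_eq_zero_iff two_ne_zero |>.mp this
  simp [hb]

private lemma key9 (a b c d e f : ℂ)
    (h0 : b * (2 * a) + f ^ 2 = 0)
    (h1 : a ^ 2 + c * (2 * b) = 0)
    (h2 : b ^ 2 + d * (2 * c) = 0)
    (h3 : c ^ 2 + e * (2 * d) = 0)
    (h4 : d ^ 2 + f * (2 * e) = 0)
    (h5 : e ^ 2 + a * (2 * f) = 0) :
    a = 0 ∧ b = 0 ∧ c = 0 ∧ d = 0 ∧ e = 0 ∧ f = 0 := by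
  have hP : (63 : ℂ) * (a*b*c*d*e*f)^2 = 0 := by
    linear_combination (-(b^2*c^2*d^2*e^2*f^2)) * h1 + (2*b*c)*(c^2*d^2*e^2*f^2) * h2 +
      (-4*b*c*c*d)*(d^2*e^2*f^2) * h3 + (8*b*c*c*d*d*e)*(e^2*f^2) * h4 +
      (-16*b*c*c*d*d*e*e*f)*(f^2) * h5 + (32*b*c*c*d*d*e*e*f*f*a) * h0
  have hsq : (a*b*c*d*e*f) ^ 2 = 0 := by
    rcases mul_eq_zero.mp hP with h | h
    · norm_num at h
    · exact h
  have hprod : a*b*c*d*e*f = 0 := pow_eq_zero_iff two_ne_zero |>.mp hsq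
  rcases mul_eq_zero.mp hprod with h | hf0
  rcases mul_eq_zero.mp h with h | he0
  rcases mul_eq_zero.mp h with h | hd0
  rcases mul_eq_zero.mp h with h | hc0
  rcases mul_eq_zero.mp h with ha0 | hb0
  · obtain ⟨hb, hc, hd, he, hf⟩ := cascade9 a b c d e f h0 h2 h3 h4 h5 ha0
    exact ⟨ha0, hb, hc, hd, he, hf⟩
  · obtain ⟨hc, hd, he, hf, ha⟩ := cascade9 b c d e f a
      (by linear_combination h1) h3 h4 h5 (by linear_combination h0) hb0
    exact ⟨ha, hb0, hc, hd, he, hf⟩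
  · obtain ⟨hd, he, hf, ha, hb⟩ := cascade9 c d e f a b
      (by linear_combination h2) h4 h5 (by linear_combination h0) (by linear_combination h1) hc0
    exact ⟨ha, hb, hc0, hd, he, hf⟩
  · obtain ⟨he, hf, ha, hb, hc⟩ := cascade9 d e f a b c
      (by linear_combination h3) h5 (by linear_combination h0) (by linear_combination h1)
      (by linear_combination h2) hd0
    exact ⟨ha, hb, hc, hd0, he, hf⟩
  · obtain ⟨hf, ha, hb, hc, hd⟩ := cascade9 e f a b c d
      (by linear_combination h4) (by linear_combination h0) (by linear_combination h1)
      (by linear_combination h2) (by linear_combination h3) he0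
    exact ⟨ha, hb, hc, hd, he0, hf⟩
  · obtain ⟨ha, hb, hc, hd, he⟩ := cascade9 f a b c d e
      (by linear_combination h5) (by linear_combination h1) (by linear_combination h2)
      (by linear_combination h3) (by linear_combination h4) hf0
    exact ⟨ha, hb, hc, hd, he, hf0⟩

open MvPolynomial in
/-- The cubic `x_0^2 x_1 + x_1^2 x_2 + x_2^2 x_3 + x_3^2 x_4 + x_4^2 x_5 + x_5^2 x_0`
(Family II) is smooth: its gradient vanishes only at the origin of `ℂ^6`. -/
theorem stmt_9 :
    ∀ x : Fin 6 → ℂ,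
      (∀ i : Fin 6, eval x (pderiv i
        ((X 0) ^ 2 * X 1 + (X 1) ^ 2 * X 2 + (X 2) ^ 2 * X 3 + (X 3) ^ 2 * X 4 +
          (X 4) ^ 2 * X 5 + (X 5) ^ 2 * X 0 : MvPolynomial (Fin 6) ℂ)) = 0) →
      x = 0 := by
  intro x h
  have h0 := h 0; have h1 := h 1; have h2 := h 2
  have h3 := h 3; have h4 := h 4; have h5 := h 5
  simp [pderiv_mul, pderiv_X, Pi.single_apply] at h0 h1 h2 h3 h4 h5
  obtain ⟨ha, hb, hc, hd, he, hf⟩ :=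
    key9 (x 0) (x 1) (x 2) (x 3) (x 4) (x 5) h0 h1 h2 h3 h4 h5
  funext i
  fin_cases i <;> simpa using by first | exact ha | exact hb | exact hc | exact hd | exact he | exact hf
end

section
/- The cubic hypersurface in ℙ^5 defined by T = x_0^3 + x_0 x_1^2 + x_1 x_2^2 + x_1 x_3^2 + x_0 x_2 x_3 + x_3 x_4^2 + x_2 x_5^2 is smooth: the system ∂T/∂x_0 = ⋯ = ∂T/∂x_5 = 0 has only the trivial solution in ℂ^6. -/
private lemma sq0 {a : ℂ} (h : a ^ 2 = 0) : a = 0 :=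
  (pow_eq_zero_iff two_ne_zero).mp h

private lemma aux_ab {a b : ℂ} (h0 : 3 * a ^ 2 + b ^ 2 = 0) (h1 : a * b = 0) :
    a = 0 ∧ b = 0 := by
  rcases mul_eq_zero.mp h1 with h | h
  · subst h
    refine ⟨rfl, sq0 (by linear_combination h0)⟩
  · subst h
    refine ⟨sq0 (by linear_combination h0 / 3), rfl⟩

open MvPolynomial in
/-- The cubic `x_0^3 + x_0 x_1^2 + x_1 x_2^2 + x_1 x_3^2 + x_0 x_2 x_3 + x_3 x_4^2 + x_2 x_5^2`
(Family V-(3)) is smooth: its gradient vanishes only at the origin of `ℂ^6`. -/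
theorem stmt_10 :
    ∀ x : Fin 6 → ℂ,
      (∀ i : Fin 6, eval x (pderiv i
        ((X 0) ^ 3 + X 0 * (X 1) ^ 2 + X 1 * (X 2) ^ 2 + X 1 * (X 3) ^ 2 +
          X 0 * X 2 * X 3 + X 3 * (X 4) ^ 2 + X 2 * (X 5) ^ 2 :
          MvPolynomial (Fin 6) ℂ)) = 0) →
      x = 0 := by
  intro x h
  have h0 := h 0
  have h1 := h 1
  have h2 := h 2
  have h3 := h 3
  have h4 := h 4
  have h5 := h 5
  simp [pderiv_X, Pi.single_apply] at h0 h1 h2 h3 h4 h5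
  -- h0 : 3 * x 0 ^ 2 + x 1 ^ 2 + x 3 * x 2 = 0
  -- h1 : x 0 * (2 * x 1) + x 2 ^ 2 + x 3 ^ 2 = 0
  -- h2 : x 1 * (2 * x 2) + x 3 * x 0 + x 5 ^ 2 = 0
  -- h3 : x 1 * (2 * x 3) + x 0 * x 2 + x 4 ^ 2 = 0
  -- h4 : x 3 = 0 ∨ x 4 = 0
  -- h5 : x 2 = 0 ∨ x 5 = 0
  have key : x 0 = 0 ∧ x 1 = 0 ∧ x 2 = 0 ∧ x 3 = 0 ∧ x 4 = 0 ∧ x 5 = 0 := by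
    rcases h4 with hd | he
    · -- x 3 = 0
      rcases h5 with hc | hf
      · -- x 2 = 0
        obtain ⟨ha, hb⟩ := aux_ab (a := x 0) (b := x 1)
          (by linear_combination h0 - x 3 * hc) (by linear_combination h1 / 2 - x 3 / 2 * hd - x 2 / 2 * hc)
        exact ⟨ha, hb, hc, hd, sq0 (by linear_combination h3 - 2 * x 1 * hd - x 0 * hc),
          sq0 (by linear_combination h2 - 2 * x 1 * hc - x 0 * hd)⟩
      · -- x 5 = 0
        have hbc : x 1 = 0 ∨ x 2 = 0 := by
          rcases mul_eq_zero.mp (show x 1 * x 2 = 0 by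
            linear_combination h2 / 2 - x 0 / 2 * hd - x 5 / 2 * hf) with h | h
          exacts [Or.inl h, Or.inr h]
        rcases hbc with hb | hc
        · have ha : x 0 = 0 := sq0 (by
            linear_combination h0 / 3 - x 1 / 3 * hb - x 2 / 3 * hd)
          have hc : x 2 = 0 := sq0 (by linear_combination h1 - 2 * x 0 * hb - x 3 * hd)
          exact ⟨ha, hb, hc, hd, sq0 (by linear_combination h3 - 2 * x 1 * hd - x 0 * hc), hf⟩
        · obtain ⟨ha, hb⟩ := aux_ab (a := x 0) (b := x 1)
            (by linear_combination h0 - x 3 * hc) (by linear_combination h1 / 2 - x 3 / 2 * hd - x 2 / 2 * hc)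
          exact ⟨ha, hb, hc, hd, sq0 (by linear_combination h3 - 2 * x 1 * hd - x 0 * hc), hf⟩
    · -- x 4 = 0
      rcases h5 with hc | hf
      · -- x 2 = 0
        have hbd : x 1 = 0 ∨ x 3 = 0 := by
          rcases mul_eq_zero.mp (show x 1 * x 3 = 0 by
            linear_combination h3 / 2 - x 0 / 2 * hc - x 4 / 2 * he) with h | h
          exacts [Or.inl h, Or.inr h]
        rcases hbd with hb | hd
        · have ha : x 0 = 0 := sq0 (by
            linear_combination h0 / 3 - x 1 / 3 * hb - x 3 / 3 * hc)
          have hd : x 3 = 0 := sq0 (by linear_combination h1 - 2 * x 0 * hb - x 2 * hc)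
          exact ⟨ha, hb, hc, hd, he,
            sq0 (by linear_combination h2 - 2 * x 1 * hc - x 0 * hd)⟩
        · obtain ⟨ha, hb⟩ := aux_ab (a := x 0) (b := x 1)
            (by linear_combination h0 - x 3 * hc) (by linear_combination h1 / 2 - x 3 / 2 * hd - x 2 / 2 * hc)
          exact ⟨ha, hb, hc, hd, he,
            sq0 (by linear_combination h2 - 2 * x 1 * hc - x 0 * hd)⟩
      · -- x 5 = 0
        -- factorizations: (2b+a)(c+d) = 0 and (2b-a)(c-d) = 0
        have fac1 : (2 * x 1 + x 0) * (x 2 + x 3) = 0 := by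
          linear_combination h2 + h3 - x 4 * he - x 5 * hf
        have fac2 : (2 * x 1 - x 0) * (x 2 - x 3) = 0 := by
          linear_combination h2 - h3 + x 4 * he - x 5 * hf
        rcases mul_eq_zero.mp fac1 with g1 | g1 <;> rcases mul_eq_zero.mp fac2 with g2 | g2
        · -- 2b + a = 0 and 2b - a = 0 → a = b = 0
          have hb : x 1 = 0 := by linear_combination (g1 + g2) / 4
          have ha : x 0 = 0 := by linear_combination (g1 - g2) / 2
          -- h0: dc = 0, h1: c²+d² = 0
          have hcd : x 3 * x 2 = 0 := by
            linear_combination h0 - 3 * x 0 * ha - x 1 * hb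
          rcases mul_eq_zero.mp hcd with hd | hc
          · have hc : x 2 = 0 := sq0 (by
              linear_combination h1 - 2 * x 1 * ha - x 3 * hd)
            exact ⟨ha, hb, hc, hd, he, hf⟩
          · have hd : x 3 = 0 := sq0 (by
              linear_combination h1 - 2 * x 1 * ha - x 2 * hc)
            exact ⟨ha, hb, hc, hd, he, hf⟩
        · -- 2b + a = 0, c = d : 13b² + c² = 0, -4b² + 2c² = 0 → 15b² = 0
          -- a = -2b, c = d
          have hb : x 1 = 0 := sq0 (by
            linear_combination (2 * h0 - h1 - (6 * x 0 - 14 * x 1) * g1 + (x 2 - x 3) * g2) / 30)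
          have ha : x 0 = 0 := by linear_combination g1 - 2 * hb
          have hc : x 2 = 0 := sq0 (by
            linear_combination h1 / 2 - x 1 * ha + (x 2 + x 3) / 2 * g2)
          have hd : x 3 = 0 := by linear_combination hc - g2
          exact ⟨ha, hb, hc, hd, he, hf⟩
        · -- c = -d, 2b - a = 0
          have hb : x 1 = 0 := sq0 (by
            linear_combination (h0 + h1 / 2 + (3 * x 0 + 7 * x 1) * g2 - (x 2 + x 3) / 2 * g1) / 15)
          have ha : x 0 = 0 := by linear_combination 2 * hb - g2
          have hc : x 2 = 0 := sq0 (by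
            linear_combination h1 / 2 - x 1 * ha + (x 2 - x 3) / 2 * g1)
          have hd : x 3 = 0 := by linear_combination g1 - hc
          exact ⟨ha, hb, hc, hd, he, hf⟩
        · -- c + d = 0 and c - d = 0 → c = d = 0
          have hc : x 2 = 0 := by linear_combination (g1 + g2) / 2
          have hd : x 3 = 0 := by linear_combination (g1 - g2) / 2
          obtain ⟨ha, hb⟩ := aux_ab (a := x 0) (b := x 1)
            (by linear_combination h0 - x 3 * hc) (by linear_combination h1 / 2 - x 3 / 2 * hd - x 2 / 2 * hc)
          exact ⟨ha, hb, hc, hd, he, hf⟩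
  obtain ⟨ha, hb, hc, hd, he, hf⟩ := key
  funext i
  fin_cases i <;> simpa using ‹_›
end

section
/- Every cubic fourfold T of the form x_4^2 L_1 + x_5^2 L_2 + x_4 x_5 L_3 + C_1 x_4 + C_2 x_5 + C_3(x_4,x_5), with L_i linear and C_1, C_2 quadratic in x_0,…,x_3 and C_3 a cubic in x_4, x_5, is singular: there exist at least two points on which all partial derivatives vanish, lying on the quadric intersection inside the 3-plane {x_4 = x_5 = 0}. -/
open Polynomial in
lemma quad_root (a b c : ℂ) (ha : a ≠ 0) : ∃ z : ℂ, a*z^2 + b*z + c = 0 := by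
  obtain ⟨z, hz⟩ := Complex.exists_root (f := C a * X^2 + C b * X + C c) (by
    have h : (C a * X^2 + C b * X + C c).degree = 2 := by compute_degree!
    rw [h]; norm_num)
  exact ⟨z, by simpa [Polynomial.IsRoot] using hz⟩

open Polynomial in
lemma quartic_root (r0 r1 r2 r3 r4 : ℂ) :
    ∃ s t : ℂ, ¬(s = 0 ∧ t = 0) ∧
      r0*s^4 + r1*s^3*t + r2*s^2*t^2 + r3*s*t^3 + r4*t^4 = 0 := by
  by_cases h4 : r4 = 0
  · exact ⟨0, 1, by simp, by simp [h4]⟩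
  · obtain ⟨t, ht⟩ := Complex.exists_root
      (f := C r4 * X^4 + C r3 * X^3 + C r2 * X^2 + C r1 * X + C r0) (by
      have h : (C r4 * X^4 + C r3 * X^3 + C r2 * X^2 + C r1 * X + C r0).degree = 4 := by
        compute_degree!
      rw [h]; norm_num)
    refine ⟨1, t, by simp, ?_⟩
    simp only [Polynomial.IsRoot, eval_add, eval_mul, eval_pow, eval_C, eval_X] at ht
    linear_combination ht

lemma conic_aux (a b1 b2 c1 c2 c3 A B1 B2 D1 D2 D3 : ℂ) (ha : a ≠ 0) :
    ∃ s t z : ℂ, ¬(s = 0 ∧ t = 0 ∧ z = 0) ∧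
      a*z^2 + (b1*s + b2*t)*z + (c1*s^2 + c2*s*t + c3*t^2) = 0 ∧
      A*z^2 + (B1*s + B2*t)*z + (D1*s^2 + D2*s*t + D3*t^2) = 0 := by
  obtain ⟨s, t, hst, hR⟩ := quartic_root
    (c1*c1*A*A - b1*c1*A*B1 + b1*b1*A*D1 + a*c1*B1*B1 - 2*a*c1*A*D1 - a*b1*B1*D1 + a*a*D1*D1)
    (2*c1*c2*A*A - b2*c1*A*B1 - b1*c2*A*B1 - b1*c1*A*B2 + 2*b1*b2*A*D1 + b1*b1*A*D2 + a*c2*B1*B1 - 2*a*c2*A*D1 + 2*a*c1*B1*B2 - 2*a*c1*A*D2 - a*b2*B1*D1 - a*b1*B2*D1 - a*b1*B1*D2 + 2*a*a*D1*D2)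
    (c2*c2*A*A + 2*c1*c3*A*A - b2*c2*A*B1 - b2*c1*A*B2 + b2*b2*A*D1 - b1*c3*A*B1 - b1*c2*A*B2 + 2*b1*b2*A*D2 + b1*b1*A*D3 + a*c3*B1*B1 - 2*a*c3*A*D1 + 2*a*c2*B1*B2 - 2*a*c2*A*D2 + a*c1*B2*B2 - 2*a*c1*A*D3 - a*b2*B2*D1 - a*b2*B1*D2 - a*b1*B2*D2 - a*b1*B1*D3 + a*a*D2*D2 + 2*a*a*D1*D3)
    (2*c2*c3*A*A - b2*c3*A*B1 - b2*c2*A*B2 + b2*b2*A*D2 - b1*c3*A*B2 + 2*b1*b2*A*D3 + 2*a*c3*B1*B2 - 2*a*c3*A*D2 + a*c2*B2*B2 - 2*a*c2*A*D3 - a*b2*B2*D2 - a*b2*B1*D3 - a*b1*B2*D3 + 2*a*a*D2*D3)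
    (c3*c3*A*A - b2*c3*A*B2 + b2*b2*A*D3 + a*c3*B2*B2 - 2*a*c3*A*D3 - a*b2*B2*D3 + a*a*D3*D3)
  set b : ℂ := b1*s + b2*t with hb
  set c : ℂ := c1*s^2 + c2*s*t + c3*t^2 with hc
  set B : ℂ := B1*s + B2*t with hB
  set D : ℂ := D1*s^2 + D2*s*t + D3*t^2 with hD
  have hRval : (a*D - A*c)^2 - (a*B - A*b)*(b*D - B*c) = 0 := by
    rw [hb, hc, hB, hD]; linear_combination hR
  by_cases hβ : a*B - A*b = 0
  · have hγ : a*D - A*c = 0 := by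
      have h2 : (a*D - A*c)^2 = 0 := by rw [← hRval, hβ]; ring
      exact pow_eq_zero_iff (two_ne_zero).elim |>.mp h2
    obtain ⟨z, hz⟩ := quad_root a b c ha
    refine ⟨s, t, z, by tauto, hz, ?_⟩
    have key : a * (A*z^2 + B*z + D) = A*(a*z^2 + b*z + c) + ((a*B - A*b)*z + (a*D - A*c)) := by
      ring
    rw [hz, hβ, hγ] at key
    simpa [ha] using key
  · refine ⟨s, t, -(a*D - A*c)/(a*B - A*b), by tauto, ?_, ?_⟩
    · have h1 : (a*B - A*b)^2 * (a*(-(a*D - A*c)/(a*B - A*b))^2 + b*(-(a*D - A*c)/(a*B - A*b)) + c)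
          = a*((a*D - A*c)^2 - (a*B - A*b)*(b*D - B*c)) := by
        field_simp
        ring
      rw [hRval, mul_zero] at h1
      have := pow_ne_zero 2 hβ
      have h2 := mul_eq_zero.mp h1
      tauto
    · have h1 : (a*B - A*b)^2 * (A*(-(a*D - A*c)/(a*B - A*b))^2 + B*(-(a*D - A*c)/(a*B - A*b)) + D)
          = A*((a*D - A*c)^2 - (a*B - A*b)*(b*D - B*c)) := by
        field_simp
        ring
      rw [hRval, mul_zero] at h1
      have := pow_ne_zero 2 hβ
      have h2 := mul_eq_zero.mp h1
      tauto

open MvPolynomial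

lemma eval_pderiv_zero (p : MvPolynomial (Fin 6) ℂ) (P : Fin 6 → ℂ)
    (hP4 : P 4 = 0) (hP5 : P 5 = 0) (h : ∀ α ∈ p.support, 2 ≤ α 4 + α 5) (i : Fin 6) :
    eval P (pderiv i p) = 0 := by
  conv_lhs => rw [p.as_sum, map_sum, map_sum]
  refine Finset.sum_eq_zero fun α hα => ?_
  rw [pderiv_monomial, eval_monomial]
  by_cases hi : α i = 0
  · simp [hi]
  · have e4 : ((α - Finsupp.single i 1 : Fin 6 →₀ ℕ)) 4 = α 4 - (if i = 4 then 1 else 0) := by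
      simp [Finsupp.tsub_apply, Finsupp.single_apply]
    have e5 : ((α - Finsupp.single i 1 : Fin 6 →₀ ℕ)) 5 = α 5 - (if i = 5 then 1 else 0) := by
      simp [Finsupp.tsub_apply, Finsupp.single_apply]
    have hmem := h α hα
    have hor : ((α - Finsupp.single i 1 : Fin 6 →₀ ℕ)) 4 ≠ 0 ∨ ((α - Finsupp.single i 1 : Fin 6 →₀ ℕ)) 5 ≠ 0 := by
      rw [e4, e5]; split_ifs with h1 h2 <;> omega
    have hprod : ((α - Finsupp.single i 1).prod fun n e => P n ^ e) = 0 := by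
      rcases hor with hl | hl
      · exact Finset.prod_eq_zero (Finsupp.mem_support_iff.mpr hl) (by show P 4 ^ _ = 0; rw [hP4]; exact zero_pow hl)
      · exact Finset.prod_eq_zero (Finsupp.mem_support_iff.mpr hl) (by show P 5 ^ _ = 0; rw [hP5]; exact zero_pow hl)
    rw [hprod, mul_zero]

lemma eval_quadratic_expand (q : MvPolynomial (Fin 6) ℂ) (hq : q.IsHomogeneous 2)
    (i j k : Fin 6) (hij : i ≠ j) (hik : i ≠ k) (hjk : j ≠ k) :
    ∃ a b1 b2 c1 c2 c3 : ℂ, ∀ s t z : ℂ,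
      eval (fun l => if l = i then s else if l = j then t else if l = k then z else 0) q
        = a*z^2 + (b1*s + b2*t)*z + (c1*s^2 + c2*s*t + c3*t^2) := by
  set P : ℂ → ℂ → ℂ → Fin 6 → ℂ :=
    fun s t z l => if l = i then s else if l = j then t else if l = k then z else 0 with hP
  set Quad : (ℂ → ℂ → ℂ → ℂ) → Prop := fun F => ∃ a b1 b2 c1 c2 c3 : ℂ, ∀ s t z : ℂ,
      F s t z = a*z^2 + (b1*s + b2*t)*z + (c1*s^2 + c2*s*t + c3*t^2) with hQuad
  have hPi : ∀ s t z, P s t z i = s := fun s t z => by simp [hP]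
  have hPj : ∀ s t z, P s t z j = t := fun s t z => by simp [hP, Ne.symm hij]
  have hPk : ∀ s t z, P s t z k = z := fun s t z => by simp [hP, Ne.symm hik, Ne.symm hjk]
  suffices h : Quad (fun s t z => eval (P s t z) q) by
    obtain ⟨a, b1, b2, c1, c2, c3, hh⟩ := h
    exact ⟨a, b1, b2, c1, c2, c3, hh⟩
  have hrw : (fun s t z => eval (P s t z) q)
      = ∑ α ∈ q.support, fun s t z => eval (P s t z) (monomial α (coeff α q)) := by
    funext s t z
    rw [Finset.sum_apply, Finset.sum_apply, Finset.sum_apply]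
    conv_lhs => rw [q.as_sum, map_sum]
  rw [hrw]
  apply Finset.sum_induction
  · rintro F G ⟨a, b1, b2, c1, c2, c3, hF⟩ ⟨a', b1', b2', c1', c2', c3', hG⟩
    refine ⟨a+a', b1+b1', b2+b2', c1+c1', c2+c2', c3+c3', fun s t z => ?_⟩
    have : (F + G) s t z = F s t z + G s t z := rfl
    rw [this, hF, hG]; ring
  · exact ⟨0,0,0,0,0,0, fun s t z => by simp⟩
  · intro α hα
    by_cases hout : ∃ l, l ≠ i ∧ l ≠ j ∧ l ≠ k ∧ α l ≠ 0
    · obtain ⟨l, hli, hlj, hlk, hl⟩ := hout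
      refine ⟨0,0,0,0,0,0, fun s t z => ?_⟩
      show eval (P s t z) ((monomial α) (coeff α q)) = _
      rw [eval_monomial, Finsupp.prod,
        Finset.prod_eq_zero (Finsupp.mem_support_iff.mpr hl)
          (by show P s t z l ^ _ = 0
              have : P s t z l = 0 := by simp [hP, hli, hlj, hlk]
              rw [this]; exact zero_pow hl)]
      ring
    · push_neg at hout
      have hw := hq (MvPolynomial.mem_support_iff.mp hα)
      have hdeg : Finsupp.degree α = 2 := by rw [Finsupp.degree_eq_weight_one]; exact hw
      have hsub : α.support ⊆ {i, j, k} := by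
        intro l hl
        simp only [Finset.mem_insert, Finset.mem_singleton]
        by_contra hc
        push_neg at hc
        exact (Finsupp.mem_support_iff.mp hl) (hout l hc.1 hc.2.1 hc.2.2)
      have hsum2 : α i + α j + α k = 2 := by
        have h1 : Finsupp.degree α = ∑ l ∈ ({i, j, k} : Finset (Fin 6)), α l :=
          Finset.sum_subset hsub fun l _ hl => Finsupp.notMem_support_iff.mp hl
        rw [h1, Finset.sum_insert (by simp [hij, hik]),
          Finset.sum_insert (by simp [hjk]), Finset.sum_singleton] at hdeg
        omega
      -- key evaluation for monomials of the shape single u 1 + single v 1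
      have key : ∀ (u v : Fin 6) (c : ℂ) (s t z : ℂ),
          eval (P s t z) (monomial (Finsupp.single u 1 + Finsupp.single v 1) c)
            = c * P s t z u * P s t z v := by
        intro u v c s t z
        rw [monomial_single_add,
          show (Finsupp.single v (1:ℕ)) = Finsupp.single v 1 + (0 : Fin 6 →₀ ℕ) from
            (add_zero _).symm,
          monomial_single_add, monomial_zero', map_mul, map_mul,
          eval_pow, eval_pow, eval_X, eval_X, eval_C]
        ring
      have hext : ∀ (u v : Fin 6), α u = 1 → α v = 1 → u ≠ v →
          (∀ l, l ≠ u → l ≠ v → α l = 0) → α = Finsupp.single u 1 + Finsupp.single v 1 := by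
        intro u v hu hv huv hrest
        ext l
        rcases eq_or_ne l u with rfl | hlu
        · simp [Finsupp.single_apply, Ne.symm huv, hu]
        · rcases eq_or_ne l v with rfl | hlv
          · simp [Finsupp.single_apply, huv.symm, Ne.symm hlu, hv]
          · simp [Finsupp.single_apply, Ne.symm hlu, Ne.symm hlv, hrest l hlu hlv]
      have hext2 : ∀ (u : Fin 6), α u = 2 → (∀ l, l ≠ u → α l = 0) →
          α = Finsupp.single u 1 + Finsupp.single u 1 := by
        intro u hu hrest
        ext l
        rcases eq_or_ne l u with rfl | hlu
        · simp [Finsupp.single_apply, hu]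
        · simp [Finsupp.single_apply, Ne.symm hlu, hrest l hlu]
      have hcase : (α i = 2 ∧ α j = 0 ∧ α k = 0) ∨ (α j = 2 ∧ α i = 0 ∧ α k = 0) ∨
          (α k = 2 ∧ α i = 0 ∧ α j = 0) ∨ (α i = 1 ∧ α j = 1 ∧ α k = 0) ∨
          (α i = 1 ∧ α k = 1 ∧ α j = 0) ∨ (α j = 1 ∧ α k = 1 ∧ α i = 0) := by omega
      have hres : ∀ l, (∀ m : Fin 6, (m = i ∨ m = j ∨ m = k) → m ≠ l → α m = 0) →
        True := fun _ _ => trivial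
      rcases hcase with ⟨h1, h2, h3⟩ | ⟨h1, h2, h3⟩ | ⟨h1, h2, h3⟩ | ⟨h1, h2, h3⟩ |
          ⟨h1, h2, h3⟩ | ⟨h1, h2, h3⟩
      · have hα2 := hext2 i h1 (fun l hl => by
          rcases eq_or_ne l j with rfl | hlj; · exact h2
          rcases eq_or_ne l k with rfl | hlk; · exact h3
          exact hout l hl hlj hlk)
        exact ⟨0,0,0, coeff α q, 0, 0, fun s t z => by
          show eval (P s t z) ((monomial α) (coeff α q)) = _
          rw [hα2, key]
          try simp only [hPi, hPj, hPk]
          ring⟩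
      · have hα2 := hext2 j h1 (fun l hl => by
          rcases eq_or_ne l i with rfl | hli; · exact h2
          rcases eq_or_ne l k with rfl | hlk; · exact h3
          exact hout l hli hl hlk)
        exact ⟨0,0,0, 0, 0, coeff α q, fun s t z => by
          show eval (P s t z) ((monomial α) (coeff α q)) = _
          rw [hα2, key]
          try simp only [hPi, hPj, hPk]
          ring⟩
      · have hα2 := hext2 k h1 (fun l hl => by
          rcases eq_or_ne l i with rfl | hli; · exact h2
          rcases eq_or_ne l j with rfl | hlj; · exact h3
          exact hout l hli hlj hl)
        exact ⟨coeff α q, 0,0, 0, 0, 0, fun s t z => by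
          show eval (P s t z) ((monomial α) (coeff α q)) = _
          rw [hα2, key]
          try simp only [hPi, hPj, hPk]
          ring⟩
      · have hα2 := hext i j h1 h2 hij (fun l hli hlj => by
          rcases eq_or_ne l k with rfl | hlk; · exact h3
          exact hout l hli hlj hlk)
        exact ⟨0, 0, 0, 0, coeff α q, 0, fun s t z => by
          show eval (P s t z) ((monomial α) (coeff α q)) = _
          rw [hα2, key]
          try simp only [hPi, hPj, hPk]
          ring⟩
      · have hα2 := hext i k h1 h2 hik (fun l hli hlk => by
          rcases eq_or_ne l j with rfl | hlj; · exact h3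
          exact hout l hli hlj hlk)
        exact ⟨0, coeff α q, 0, 0, 0, 0, fun s t z => by
          show eval (P s t z) ((monomial α) (coeff α q)) = _
          rw [hα2, key]
          try simp only [hPi, hPj, hPk]
          ring⟩
      · have hα2 := hext j k h1 h2 hjk (fun l hlj hlk => by
          rcases eq_or_ne l i with rfl | hli; · exact h3
          exact hout l hli hlj hlk)
        exact ⟨0, 0, coeff α q, 0, 0, 0, fun s t z => by
          show eval (P s t z) ((monomial α) (coeff α q)) = _
          rw [hα2, key]
          try simp only [hPi, hPj, hPk]
          ring⟩
-- conic_pair, common_zero, main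
lemma conic_pair (a b1 b2 c1 c2 c3 A B1 B2 D1 D2 D3 : ℂ) :
    ∃ s t z : ℂ, ¬(s = 0 ∧ t = 0 ∧ z = 0) ∧
      a*z^2 + (b1*s + b2*t)*z + (c1*s^2 + c2*s*t + c3*t^2) = 0 ∧
      A*z^2 + (B1*s + B2*t)*z + (D1*s^2 + D2*s*t + D3*t^2) = 0 := by
  by_cases ha : a = 0
  · by_cases hA : A = 0
    · exact ⟨0, 0, 1, by simp, by simp [ha], by simp [hA]⟩
    · obtain ⟨s, t, z, h0, h1, h2⟩ := conic_aux A B1 B2 D1 D2 D3 a b1 b2 c1 c2 c3 hA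
      exact ⟨s, t, z, h0, h2, h1⟩
  · exact conic_aux _ _ _ _ _ _ _ _ _ _ _ _ ha

open MvPolynomial in
lemma common_zero (q1 q2 : MvPolynomial (Fin 6) ℂ) (h1 : q1.IsHomogeneous 2)
    (h2 : q2.IsHomogeneous 2) (i j k : Fin 6) (hij : i ≠ j) (hik : i ≠ k) (hjk : j ≠ k) :
    ∃ P : Fin 6 → ℂ, P ≠ 0 ∧ (∀ l, l ≠ i → l ≠ j → l ≠ k → P l = 0) ∧
      eval P q1 = 0 ∧ eval P q2 = 0 := by
  obtain ⟨a, b1, b2, c1, c2, c3, hq1⟩ := eval_quadratic_expand q1 h1 i j k hij hik hjk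
  obtain ⟨A, B1, B2, D1, D2, D3, hq2⟩ := eval_quadratic_expand q2 h2 i j k hij hik hjk
  obtain ⟨s, t, z, hne, e1, e2⟩ := conic_pair a b1 b2 c1 c2 c3 A B1 B2 D1 D2 D3
  refine ⟨fun l => if l = i then s else if l = j then t else if l = k then z else 0,
    ?_, ?_, ?_, ?_⟩
  · intro h0
    apply hne
    refine ⟨?_, ?_, ?_⟩
    · have := congrFun h0 i; simpa using this
    · have := congrFun h0 j; simpa [Ne.symm hij] using this
    · have := congrFun h0 k; simpa [Ne.symm hik, Ne.symm hjk] using this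
  · intro l hli hlj hlk; simp [hli, hlj, hlk]
  · rw [hq1]; exact e1
  · rw [hq2]; exact e2

open MvPolynomial in
/-- Every cubic of the form `x_4^2 L_1 + x_5^2 L_2 + x_4 x_5 L_3 + C_1 x_4 + C_2 x_5 + C_3`,
with `L_i` linear and `C_1, C_2` quadratic in `x_0,…,x_3` and `C_3` cubic in `x_4, x_5`,
is singular at (at least) two distinct projective points lying on the intersection of the
quadrics `{C_1 = C_2 = 0}` inside the 3-plane `{x_4 = x_5 = 0}`. -/
theorem stmt_11 (L1 L2 L3 C1 C2 C3 : MvPolynomial (Fin 6) ℂ)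
    (hL1 : L1.IsHomogeneous 1) (hL2 : L2.IsHomogeneous 1) (hL3 : L3.IsHomogeneous 1)
    (hL1v : ∀ α ∈ L1.support, α 4 = 0 ∧ α 5 = 0)
    (hL2v : ∀ α ∈ L2.support, α 4 = 0 ∧ α 5 = 0)
    (hL3v : ∀ α ∈ L3.support, α 4 = 0 ∧ α 5 = 0)
    (hC1 : C1.IsHomogeneous 2) (hC2 : C2.IsHomogeneous 2)
    (hC1v : ∀ α ∈ C1.support, α 4 = 0 ∧ α 5 = 0)
    (hC2v : ∀ α ∈ C2.support, α 4 = 0 ∧ α 5 = 0)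
    (hC3 : C3.IsHomogeneous 3)
    (hC3v : ∀ α ∈ C3.support, α 0 = 0 ∧ α 1 = 0 ∧ α 2 = 0 ∧ α 3 = 0) :
    ∃ P Q : Fin 6 → ℂ, P ≠ 0 ∧ Q ≠ 0 ∧ (¬ ∃ c : ℂ, Q = c • P) ∧
      P 4 = 0 ∧ P 5 = 0 ∧ Q 4 = 0 ∧ Q 5 = 0 ∧
      eval P C1 = 0 ∧ eval P C2 = 0 ∧ eval Q C1 = 0 ∧ eval Q C2 = 0 ∧
      (∀ i : Fin 6, eval P (pderiv i ((X 4) ^ 2 * L1 + (X 5) ^ 2 * L2 +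
        X 4 * X 5 * L3 + C1 * X 4 + C2 * X 5 + C3)) = 0) ∧
      (∀ i : Fin 6, eval Q (pderiv i ((X 4) ^ 2 * L1 + (X 5) ^ 2 * L2 +
        X 4 * X 5 * L3 + C1 * X 4 + C2 * X 5 + C3)) = 0) := by
  -- the key partial-derivative computation, valid at any common zero on the plane
  have hT : ∀ R : Fin 6 → ℂ, R 4 = 0 → R 5 = 0 → eval R C1 = 0 → eval R C2 = 0 →
      ∀ i : Fin 6, eval R (pderiv i ((X 4) ^ 2 * L1 + (X 5) ^ 2 * L2 +
        X 4 * X 5 * L3 + C1 * X 4 + C2 * X 5 + C3)) = 0 := by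
    intro R h4 h5 e1 e2 i
    have hC3' : eval R (pderiv i C3) = 0 := by
      refine eval_pderiv_zero C3 R h4 h5 (fun α hα => ?_) i
      have hw := hC3 (mem_support_iff.mp hα)
      have hdeg : Finsupp.degree α = 3 := by
        rw [Finsupp.degree_eq_weight_one]; exact hw
      obtain ⟨g0, g1, g2, g3⟩ := hC3v α hα
      have huniv : Finsupp.degree α = ∑ l : Fin 6, α l :=
        Finset.sum_subset (Finset.subset_univ _)
          (fun l _ hl => Finsupp.notMem_support_iff.mp hl)
      rw [Fin.sum_univ_six] at huniv
      omega
    simp only [map_add, pderiv_mul, pderiv_pow, eval_add, eval_mul, eval_pow, eval_X,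
      h4, h5, e1, e2, hC3', map_natCast]
    norm_num
  obtain ⟨P, hPne, hPsupp, hPC1, hPC2⟩ :=
    common_zero C1 C2 hC1 hC2 1 2 3 (by decide) (by decide) (by decide)
  have hP0 : P 0 = 0 := hPsupp 0 (by decide) (by decide) (by decide)
  have hP4 : P 4 = 0 := hPsupp 4 (by decide) (by decide) (by decide)
  have hP5 : P 5 = 0 := hPsupp 5 (by decide) (by decide) (by decide)
  have hm : P 1 ≠ 0 ∨ P 2 ≠ 0 ∨ P 3 ≠ 0 := by
    by_contra hc
    push_neg at hc
    apply hPne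
    funext l
    fin_cases l
    · exact hP0
    · exact hc.1
    · exact hc.2.1
    · exact hc.2.2
    · exact hP4
    · exact hP5
  -- a helper to finish in each of the three cases
  have finish : ∀ (m : Fin 6), P m ≠ 0 → ∀ (i j k : Fin 6), i ≠ j → i ≠ k → j ≠ k →
      (m ≠ i) → (m ≠ j) → (m ≠ k) → ((4:Fin 6) ≠ i) → ((4:Fin 6) ≠ j) → ((4:Fin 6) ≠ k) →
      ((5:Fin 6) ≠ i) → ((5:Fin 6) ≠ j) → ((5:Fin 6) ≠ k) →
      (∃ P Q : Fin 6 → ℂ, P ≠ 0 ∧ Q ≠ 0 ∧ (¬ ∃ c : ℂ, Q = c • P) ∧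
      P 4 = 0 ∧ P 5 = 0 ∧ Q 4 = 0 ∧ Q 5 = 0 ∧
      eval P C1 = 0 ∧ eval P C2 = 0 ∧ eval Q C1 = 0 ∧ eval Q C2 = 0 ∧
      (∀ i : Fin 6, eval P (pderiv i ((X 4) ^ 2 * L1 + (X 5) ^ 2 * L2 +
        X 4 * X 5 * L3 + C1 * X 4 + C2 * X 5 + C3)) = 0) ∧
      (∀ i : Fin 6, eval Q (pderiv i ((X 4) ^ 2 * L1 + (X 5) ^ 2 * L2 +
        X 4 * X 5 * L3 + C1 * X 4 + C2 * X 5 + C3)) = 0)) := by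
    intro m hPm i j k hij hik hjk hmi hmj hmk h4i h4j h4k h5i h5j h5k
    obtain ⟨Q, hQne, hQsupp, hQC1, hQC2⟩ := common_zero C1 C2 hC1 hC2 i j k hij hik hjk
    have hQm : Q m = 0 := hQsupp m hmi hmj hmk
    have hQ4 : Q 4 = 0 := hQsupp 4 h4i h4j h4k
    have hQ5 : Q 5 = 0 := hQsupp 5 h5i h5j h5k
    refine ⟨P, Q, hPne, hQne, ?_, hP4, hP5, hQ4, hQ5, hPC1, hPC2, hQC1, hQC2,
      hT P hP4 hP5 hPC1 hPC2, hT Q hQ4 hQ5 hQC1 hQC2⟩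
    rintro ⟨c, hc⟩
    have hcm := congrFun hc m
    rw [hQm] at hcm
    have hc0 : c = 0 := by
      rcases mul_eq_zero.mp hcm.symm with h | h
      · exact h
      · exact absurd h hPm
    apply hQne
    rw [hc, hc0, zero_smul]
  rcases hm with hm | hm | hm
  · exact finish 1 hm 0 2 3 (by decide) (by decide) (by decide) (by decide) (by decide)
      (by decide) (by decide) (by decide) (by decide) (by decide) (by decide) (by decide)
  · exact finish 2 hm 0 1 3 (by decide) (by decide) (by decide) (by decide) (by decide)
      (by decide) (by decide) (by decide) (by decide) (by decide) (by decide) (by decide)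
  · exact finish 3 hm 0 1 2 (by decide) (by decide) (by decide) (by decide) (by decide)
      (by decide) (by decide) (by decide) (by decide) (by decide) (by decide) (by decide)
end

section
/- The cubic hypersurface in ℙ^5 defined by T = x_0^2 x_1 + x_1^2 x_2 + x_2^2 x_0 + x_3^2 x_4 + x_4^2 x_5 + x_5^2 x_3 is smooth: the only common zero in ℂ^6 of the six partial derivatives of T is the origin. -/
open MvPolynomial

lemma aux15 (a b c : ℂ) (h1 : 2*a*b + c^2 = 0) (h2 : a^2 + 2*b*c = 0)
    (h3 : b^2 + 2*c*a = 0) : a = 0 ∧ b = 0 ∧ c = 0 := by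
  have hc2 : c^2 = -(2*a*b) := by linear_combination h1
  have ha2 : a^2 = -(2*b*c) := by linear_combination h2
  have hb2 : b^2 = -(2*c*a) := by linear_combination h3
  have e : (a^2)*(b^2)*(c^2) = -(8:ℂ)*(a*b*c)^2 := by rw [ha2, hb2, hc2]; ring
  have h9 : (9:ℂ)*(a*b*c)^2 = 0 := by linear_combination e
  have habc : a*b*c = 0 := by
    have : (a*b*c)^2 = 0 := by
      have := mul_eq_zero.mp h9
      rcases this with h|h
      · norm_num at h
      · exact h
    exact pow_eq_zero_iff (two_ne_zero) |>.mp this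
  rcases mul_eq_zero.mp habc with hab | hc
  · rcases mul_eq_zero.mp hab with ha | hb
    · have hc : c = 0 := by
        have : c^2 = 0 := by rw [hc2, ha]; ring
        exact pow_eq_zero_iff two_ne_zero |>.mp this
      have hb : b = 0 := by
        have : b^2 = 0 := by rw [hb2, ha]; ring
        exact pow_eq_zero_iff two_ne_zero |>.mp this
      exact ⟨ha, hb, hc⟩
    · have ha : a = 0 := by
        have : a^2 = 0 := by rw [ha2, hb]; ring
        exact pow_eq_zero_iff two_ne_zero |>.mp this
      have hc : c = 0 := by
        have : c^2 = 0 := by rw [hc2, ha]; ring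
        exact pow_eq_zero_iff two_ne_zero |>.mp this
      exact ⟨ha, hb, hc⟩
  · have ha : a = 0 := by
      have : a^2 = 0 := by rw [ha2, hc]; ring
      exact pow_eq_zero_iff two_ne_zero |>.mp this
    have hb : b = 0 := by
      have : b^2 = 0 := by rw [hb2, hc]; ring
      exact pow_eq_zero_iff two_ne_zero |>.mp this
    exact ⟨ha, hb, hc⟩

open MvPolynomial in
/-- The cubic `x_0^2 x_1 + x_1^2 x_2 + x_2^2 x_0 + x_3^2 x_4 + x_4^2 x_5 + x_5^2 x_3`
(Family IV-(4)) is smooth: its gradient vanishes only at the origin of `ℂ^6`. -/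
theorem stmt_15 :
    ∀ x : Fin 6 → ℂ,
      (∀ i : Fin 6, eval x (pderiv i
        ((X 0) ^ 2 * X 1 + (X 1) ^ 2 * X 2 + (X 2) ^ 2 * X 0 + (X 3) ^ 2 * X 4 +
          (X 4) ^ 2 * X 5 + (X 5) ^ 2 * X 3 : MvPolynomial (Fin 6) ℂ)) = 0) →
      x = 0 := by
  intro x h
  have h0 := h 0
  have h1 := h 1
  have h2 := h 2
  have h3 := h 3
  have h4 := h 4
  have h5 := h 5
  simp only [map_add, pderiv_mul, pderiv_pow, pderiv_X, map_mul, map_pow, eval_X,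
    Pi.single_apply, map_ofNat, map_one] at h0 h1 h2 h3 h4 h5
  simp only [Fin.ext_iff, Fin.val_zero, Fin.val_one] at h0 h1 h2 h3 h4 h5
  simp (config := { decide := true }) only [reduceIte] at h0 h1 h2 h3 h4 h5
  norm_num at h0 h1 h2 h3 h4 h5
  obtain ⟨e0, e1, e2⟩ := aux15 (x 0) (x 1) (x 2) h0 h1 h2
  obtain ⟨e3, e4, e5⟩ := aux15 (x 3) (x 4) (x 5) h3 h4 h5
  funext i
  fin_cases i <;> simpa
end

section
/- Suppose e_0, …, e_5 and j are residues modulo 2^m (m ≥ 1) such that j ≡ 0, every e_i eventually maps to a '1-cycle' under the map e ↦ j − 2e (each vertex's outgoing arrow), and 3e ≡ 0 (mod 2^m) characterizes 1-cycles (so e ≡ 0 for 1-cycles). Then every e_i is divisible by 2^{m−5}; consequently the automorphism f = diag(ζ^{e_0}, …, ζ^{e_5}) with ζ a primitive 2^m-th root of unity has order dividing 32. -/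
/-- For `p = 2`: if `j ≡ 0 (mod 2^m)`, the diagram is closed on the six residues
(each vertex has an outgoing arrow `e ↦ j - 2e` landing among `e_0,…,e_5`), and every
`e_i` eventually reaches a 1-cycle (`3e ≡ 0`) under iteration of `e ↦ j - 2e`, then every
`e_i` is divisible by `2^{m-5}` modulo `2^m`; consequently `32 e_i ≡ 0 (mod 2^m)`, so the
automorphism `diag(ζ^{e_0}, …, ζ^{e_5})` has order dividing 32. -/
theorem stmt_16 (m : ℕ) (hm : 1 ≤ m) (e : Fin 6 → ℤ) (j : ℤ)
    (hj : j ≡ 0 [ZMOD (2 ^ m : ℤ)])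
    (harrow : ∀ i : Fin 6, ∃ i' : Fin 6, e i' ≡ j - 2 * e i [ZMOD (2 ^ m : ℤ)])
    (hcycle : ∀ i : Fin 6, ∃ d : ℕ,
      3 * ((fun x : ℤ => j - 2 * x)^[d] (e i)) ≡ 0 [ZMOD (2 ^ m : ℤ)]) :
    ∀ i : Fin 6, (∃ k : ℤ, e i ≡ 2 ^ (m - 5) * k [ZMOD (2 ^ m : ℤ)]) ∧
      32 * e i ≡ 0 [ZMOD (2 ^ m : ℤ)] := by
  classical
  set N : ℤ := 2 ^ m with hN
  have hjdvd : N ∣ j := by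
    have h := hj.dvd
    rw [zero_sub] at h
    exact dvd_neg.mp h
  obtain ⟨b, hb⟩ := hjdvd
  -- iterates are congruent to (-2)^d * x
  have hiter : ∀ (d : ℕ) (x : ℤ), N ∣ ((fun x : ℤ => j - 2 * x)^[d] x) - (-2) ^ d * x := by
    intro d
    induction d with
    | zero => intro x; simp
    | succ d ih =>
      intro x
      rw [Function.iterate_succ_apply']
      obtain ⟨c, hc⟩ := ih x
      refine ⟨b - 2 * c, ?_⟩
      have hz : ((-2 : ℤ)) ^ (d + 1) = -2 * (-2) ^ d := by ring
      show j - 2 * ((fun x : ℤ => j - 2 * x)^[d] x) - (-2) ^ (d + 1) * x = N * (b - 2 * c)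
      rw [hz]
      linear_combination hb - 2 * hc
  -- each e i is killed by some power of 2
  have hP : ∀ i : Fin 6, ∃ d : ℕ, N ∣ 2 ^ d * e i := by
    intro i
    obtain ⟨d, hd⟩ := hcycle i
    refine ⟨d, ?_⟩
    have h1 : N ∣ 3 * ((fun x : ℤ => j - 2 * x)^[d] (e i)) := by
      have h := hd.dvd
      rw [zero_sub] at h
      exact dvd_neg.mp h
    have h2 : N ∣ 3 * ((-2) ^ d * e i) := by
      obtain ⟨c, hc⟩ := hiter d (e i)
      obtain ⟨b2, hb2⟩ := h1
      exact ⟨b2 - 3 * c, by linear_combination hb2 - 3 * hc⟩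
    have hco : IsCoprime (N : ℤ) 3 := by
      have h23 : IsCoprime (2 : ℤ) 3 := by norm_num [Int.isCoprime_iff_gcd_eq_one]
      exact h23.pow_left
    have h3 : N ∣ (-2) ^ d * e i := hco.dvd_of_dvd_mul_left h2
    rcases Nat.even_or_odd d with hpar | hpar
    · rwa [hpar.neg_pow] at h3
    · rw [hpar.neg_pow, neg_mul] at h3
      exact dvd_neg.mp h3
  -- least such power
  let g : Fin 6 → ℕ := fun i => Nat.find (hP i)
  have hg : ∀ i, N ∣ 2 ^ (g i) * e i := fun i => Nat.find_spec (hP i)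
  have hgmin : ∀ i d, d < g i → ¬ N ∣ 2 ^ d * e i := fun i d hd => Nat.find_min (hP i) hd
  -- step: if g i ≥ 1 there is i' with g i' = g i - 1
  have hstep : ∀ i : Fin 6, 1 ≤ g i → ∃ i' : Fin 6, g i' + 1 = g i := by
    intro i hi
    obtain ⟨i', hi'⟩ := harrow i
    obtain ⟨c, hc⟩ := hi'.symm.dvd
    -- hc : e i' - (j - 2 * e i) = N * c
    have key : e i' = -2 * e i + N * (b + c) := by linear_combination hc + hb
    refine ⟨i', ?_⟩
    have h1 : N ∣ 2 ^ (g i - 1) * e i' := by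
      obtain ⟨c2, hc2⟩ := hg i
      have h2pow : (2:ℤ) ^ (g i) = 2 ^ (g i - 1) * 2 := by
        rw [← pow_succ]
        congr 1
        omega
      rw [h2pow] at hc2
      exact ⟨-c2 + 2 ^ (g i - 1) * (b + c), by
        linear_combination (2:ℤ) ^ (g i - 1) * key - hc2⟩
    have h2 : g i' ≤ g i - 1 := Nat.find_le h1
    have h3 : g i - 1 ≤ g i' := by
      by_contra hlt
      push_neg at hlt
      apply hgmin i (g i' + 1) (by omega)
      obtain ⟨c2, hc2⟩ := hg i'
      exact ⟨-c2 + 2 ^ (g i') * (b + c), by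
        linear_combination (2:ℤ) ^ (g i') * key - hc2⟩
    omega
  -- pigeonhole: g i ≤ 5
  have hg5 : ∀ i : Fin 6, g i ≤ 5 := by
    intro i
    by_contra hbig
    push_neg at hbig
    have chain : ∀ t : ℕ, t ≤ g i → ∃ i' : Fin 6, g i' = g i - t := by
      intro t
      induction t with
      | zero => intro _; exact ⟨i, by omega⟩
      | succ t ih =>
        intro ht
        obtain ⟨i', hi'⟩ := ih (by omega)
        obtain ⟨i'', hi''⟩ := hstep i' (by omega)
        exact ⟨i'', by omega⟩
    have hf : ∀ t : Fin 7, ∃ i' : Fin 6, g i' = g i - t := fun t => chain t (by omega)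
    choose c hc using hf
    have hinj : Function.Injective c := by
      intro s t hst
      have hs := hc s
      have ht := hc t
      rw [hst, ht] at hs
      have hst' : (s : ℕ) = t := by omega
      exact Fin.ext hst'
    have := Fintype.card_le_of_injective c hinj
    simp at this
  -- conclude
  intro i
  have h32 : N ∣ 32 * e i := by
    have h1 := hg i
    have h2 : (2:ℤ) ^ (g i) * e i ∣ 2 ^ 5 * e i :=
      mul_dvd_mul (pow_dvd_pow 2 (hg5 i)) dvd_rfl
    have h3 : N ∣ (2:ℤ) ^ 5 * e i := dvd_trans h1 h2
    simpa using h3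
  constructor
  · by_cases h5 : 5 ≤ m
    · have hdvd : (2:ℤ) ^ (m - 5) ∣ e i := by
        have hsplit : (2:ℤ) ^ m = 2 ^ 5 * 2 ^ (m - 5) := by
          rw [← pow_add]
          congr 1
          omega
        have h1 : (2:ℤ) ^ 5 * 2 ^ (m - 5) ∣ 2 ^ 5 * e i := by
          rw [← hsplit]
          simpa using h32
        exact (mul_dvd_mul_iff_left (by norm_num : (2:ℤ)^5 ≠ 0)).mp h1
      obtain ⟨k, hk⟩ := hdvd
      exact ⟨k, by rw [hk]⟩
    · refine ⟨e i, ?_⟩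
      have h0 : m - 5 = 0 := by omega
      rw [h0, pow_zero, one_mul]
  · rw [Int.modEq_zero_iff_dvd]
    exact h32
end
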